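/- arXiv:math/0610399 — 2 statements merged into one kernel-verified Lean document; each statement's English description precedes it below -/
import Mathlib

section
/- If z is a complex number with Re(z) > d-1 and |Arg(z - (d-1))| < \pi/d (where d \ge 2), then for each j with 0 \le j \le d-1, the difference between the arguments of the complex numbers \binom{z+d-j}{d} and \binom{z+d-j-1}{d} is strictly less than \pi/d. -/
/-- The binomial coefficient polynomial `C(z + d - j, d)` evaluated at a complex number. -/
noncomputable def binomC (d j : ℕ) (z : ℂ) : ℂ :=
  (∏ k ∈ Finset.range d, (z + (d : ℂ) - (j : ℂ) - (k : ℂ))) / (d.factorial : ℂ)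

/-!
Telescoping the products gives `C(z+d-j,d) / C(z+d-j-1,d) = (b + d) / b` with `b = z - j`.
In the closed right half-plane, adding a nonnegative real number can only shrink `|arg|`.
Applied to `(b + d) / b = d / b + 1`, where `|arg (d / b)| = |arg b|`, and then to
`b = (z - (d - 1)) + (d - 1 - j)`, this bounds the argument by `|arg (z - (d - 1))| < π / d`.
-/

open Complex

theorem binomC_mul_sub (d j : ℕ) (z : ℂ) :
    binomC d j z * (z - j) = (z + d - j) * binomC d (j + 1) z := by
  have hprod : (∏ k ∈ Finset.range d, (z + d - j - k)) * (z - j) =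
      (z + d - j) * ∏ k ∈ Finset.range d, (z + d - (j + 1 : ℕ) - k) := by
    have htele := Finset.prod_range_succ' (fun k : ℕ => z + d - j - k) d
    rw [Finset.prod_range_succ] at htele
    convert htele using 1
    · ring
    · rw [mul_comm]
      push_cast
      exact congrArg₂ _ (Finset.prod_congr rfl fun k _ => by ring) (by ring)
  rw [binomC, binomC, div_mul_eq_mul_div, hprod, mul_div_assoc]

theorem abs_arg_of_re_nonneg {x : ℂ} (hx : 0 ≤ x.re) : |arg x| = Real.arcsin (|x.im| / ‖x‖) := by
  rw [arg_of_re_nonneg hx]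
  rcases le_total 0 x.im with him | him
  · rw [abs_of_nonneg him, abs_of_nonneg (Real.arcsin_nonneg.2 (by positivity))]
  · rw [abs_of_nonpos him, abs_of_nonpos (Real.arcsin_nonpos.2 (div_nonpos_of_nonpos_of_nonneg
      him (norm_nonneg x))), neg_div, Real.arcsin_neg]

theorem abs_arg_add_ofReal_le {w : ℂ} (hw : 0 ≤ w.re) {s : ℝ} (hs : 0 ≤ s) :
    |arg (w + s)| ≤ |arg w| := by
  rcases eq_or_ne w 0 with rfl | hw0
  · simp [arg_ofReal_of_nonneg hs]
  have hws : 0 ≤ (w + s).re := by simp only [add_re, ofReal_re]; linarith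
  rw [abs_arg_of_re_nonneg hw, abs_arg_of_re_nonneg hws, show (w + s).im = w.im by simp]
  refine Real.arcsin_le_arcsin (div_le_div_of_nonneg_left (abs_nonneg _) (norm_pos_iff.2 hw0) ?_)
  rw [← pow_le_pow_iff_left₀ (norm_nonneg _) (norm_nonneg _) two_ne_zero, Complex.sq_norm,
    Complex.sq_norm, normSq_apply, normSq_apply]
  simp only [add_re, ofReal_re, add_im, ofReal_im, add_zero]
  nlinarith

theorem abs_arg_add_ofReal_div_le {b : ℂ} (hb : 0 ≤ b.re) {c : ℝ} (hc : 0 < c) :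
    |arg ((b + c) / b)| ≤ |arg b| := by
  rcases eq_or_ne b 0 with rfl | hb0
  · simp
  have harg : arg b ≠ Real.pi := fun h => (arg_eq_pi_iff.1 h).1.not_ge hb
  have hdiv : |arg (c / b)| = |arg b| := by
    rw [div_eq_mul_inv, arg_real_mul _ hc, arg_inv, if_neg harg, abs_neg]
  have hre : 0 ≤ (c / b).re := by
    rw [div_eq_mul_inv, re_ofReal_mul, inv_re]
    exact mul_nonneg hc.le (div_nonneg hb (normSq_nonneg b))
  have hsplit : (b + c) / b = c / b + (1 : ℝ) := by
    field_simp
    push_cast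
    ring
  rw [hsplit, ← hdiv]
  exact abs_arg_add_ofReal_le hre zero_le_one

/-- If `z` lies in the open cone with vertex `d-1`, angular width `2π/d` and bisecting
ray `(d-1,∞)` (with `d ≥ 2`), then for each `0 ≤ j ≤ d-1` the difference between the
arguments of `C(z+d-j,d)` and `C(z+d-j-1,d)` is strictly less than `π/d`. -/
theorem stmt_6 (d : ℕ) (hd : 2 ≤ d) (z : ℂ)
    (hre : (d : ℝ) - 1 < z.re) (harg : |Complex.arg (z - ((d : ℂ) - 1))| < Real.pi / d)
    (j : ℕ) (hj : j ≤ d - 1) :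
    |Complex.arg (binomC d j z / binomC d (j + 1) z)| < Real.pi / d := by
  have hd0 : (0 : ℝ) < d := Nat.cast_pos.2 (by omega)
  rcases eq_or_ne (binomC d (j + 1) z) 0 with h0 | h0
  · simpa [h0] using div_pos Real.pi_pos hd0
  have hjd : (j : ℝ) ≤ d - 1 := by
    rw [← Nat.cast_one, ← Nat.cast_sub (by omega)]
    exact_mod_cast hj
  have hw : 0 ≤ (z - ((d : ℂ) - 1)).re := by
    simp only [sub_re, natCast_re, one_re]; linarith
  have hb : 0 < (z - j).re := by simp only [sub_re, natCast_re]; linarith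
  have hratio : binomC d j z / binomC d (j + 1) z = (z - j + (d : ℝ)) / (z - j) := by
    have hzj : z - j ≠ 0 := fun h => by simp [h] at hb
    rw [div_eq_div_iff h0 hzj, ofReal_natCast]
    linear_combination binomC_mul_sub d j z
  calc |arg (binomC d j z / binomC d (j + 1) z)|
      ≤ |arg (z - j)| := hratio ▸ abs_arg_add_ofReal_div_le hb.le hd0
    _ = |arg (z - ((d : ℂ) - 1) + ((d - 1 - j : ℝ) : ℂ))| := by push_cast; ring_nf
    _ ≤ |arg (z - ((d : ℂ) - 1))| := abs_arg_add_ofReal_le hw (by linarith)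
    _ < Real.pi / d := harg
end

section
/- Every root of a degree 4 SNN polynomial z satisfies -4 \le Re(z) \le 3. -/
open ComplexConjugate

theorem binomC_neg_one_sub {d j : ℕ} (hj : j ≤ d) (z : ℂ) :
    binomC d j (-1 - z) = (-1) ^ d * binomC d (d - j) z := by
  have hprod : ∏ k ∈ Finset.range d, (-1 - z + d - j - k) =
      ∏ k ∈ Finset.range d, (-1) * (z + d - ((d - j : ℕ) : ℂ) - ((d - 1 - k : ℕ) : ℂ)) := by
    refine Finset.prod_congr rfl fun k hk => ?_
    have hk : 1 + k ≤ d := by linarith [Finset.mem_range.mp hk]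
    push_cast [hj, Nat.sub_sub, hk]
    ring
  rw [binomC, binomC, hprod, Finset.prod_mul_distrib, Finset.prod_const, Finset.card_range,
    Finset.prod_range_reflect (fun k => z + d - ((d - j : ℕ) : ℂ) - (k : ℂ)), mul_div_assoc]

theorem sum_rev_mul_binomC_neg_one_sub (d : ℕ) (a : Fin (d + 1) → ℂ) (z : ℂ) :
    ∑ j : Fin (d + 1), a j.rev * binomC d j (-1 - z) = (-1) ^ d * ∑ j, a j * binomC d j z := by
  rw [Finset.mul_sum, ← Equiv.sum_comp Fin.revPerm]
  refine Fintype.sum_congr _ _ fun j => ?_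
  rw [Fin.revPerm_apply, Fin.rev_rev, binomC_neg_one_sub (Nat.lt_succ_iff.mp j.rev.isLt),
    Fin.val_rev, Nat.add_sub_add_right, Nat.sub_sub_self (Nat.lt_succ_iff.mp j.isLt)]
  ring

theorem sum_ofReal_mul_ne_zero_of_re_mul_pos {ι : Type*} [Fintype ι] {h : ι → ℝ}
    (hnonneg : ∀ i, 0 ≤ h i) (hne : h ≠ 0) {w : ι → ℂ} {c : ℂ} (hw : ∀ i, 0 < (w i * c).re) :
    ∑ i, (h i : ℂ) * w i ≠ 0 := by
  obtain ⟨i, hi⟩ := Function.ne_iff.mp hne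
  have hpos : 0 < ((∑ i, (h i : ℂ) * w i) * c).re := by
    simp only [Finset.sum_mul, Complex.re_sum, mul_assoc, Complex.re_ofReal_mul]
    exact Finset.sum_pos' (fun j _ => mul_nonneg (hnonneg j) (hw j).le)
      ⟨i, Finset.mem_univ i, mul_pos ((hnonneg i).lt_of_ne' hi) (hw i)⟩
  intro hsum
  simp [hsum] at hpos

/-- Writing `z = 3 + s + y i`, each of these real parts expands to a polynomial in `s` and `y²`
with positive coefficients. -/
theorem re_binomC_four_mul_conj_pos (j : Fin 5) {z : ℂ} (hz : 3 < z.re) :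
    0 < (binomC 4 j z * conj ((z - 2) * (z - 1) * (z + 1) * (z + 2))).re := by
  obtain ⟨s, hs, hre⟩ : ∃ s : ℝ, 0 < s ∧ z.re = 3 + s := ⟨z.re - 3, by linarith, by ring⟩
  have h24 : ((4 : ℕ).factorial : ℂ) = 24 := by norm_num [Nat.factorial]
  rw [binomC, h24, div_mul_eq_mul_div, Complex.div_ofNat_re]
  refine div_pos ?_ (by norm_num)
  fin_cases j <;>
    simp only [Finset.prod_range_succ, Finset.prod_range_zero, Complex.mul_re, Complex.mul_im,
      Complex.add_re, Complex.add_im, Complex.sub_re, Complex.sub_im, Complex.conj_re,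
      Complex.conj_im, Complex.natCast_re, Complex.natCast_im, Complex.one_re, Complex.one_im,
      Complex.re_ofNat, Complex.im_ofNat, hre] <;>
    push_cast <;> ring_nf <;> positivity

theorem re_le_three_of_sum_binomC_four_eq_zero {h : Fin 5 → ℝ} (hnonneg : ∀ j, 0 ≤ h j)
    (hne : h ≠ 0) {z : ℂ} (hroot : ∑ j : Fin 5, (h j : ℂ) * binomC 4 j z = 0) : z.re ≤ 3 := by
  by_contra! hz
  exact sum_ofReal_mul_ne_zero_of_re_mul_pos hnonneg hne (re_binomC_four_mul_conj_pos · hz) hroot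

/-- Every root `z` of a degree `4` SNN polynomial satisfies `-4 ≤ Re z ≤ 3`. -/
theorem stmt_8 (h : Fin 5 → ℝ)
    (hnonneg : ∀ j, 0 ≤ h j) (hne : h ≠ 0) (z : ℂ)
    (hroot : ∑ j : Fin 5, (h j : ℂ) * binomC 4 (j : ℕ) z = 0) :
    -4 ≤ z.re ∧ z.re ≤ 3 := by
  refine ⟨?_, re_le_three_of_sum_binomC_four_eq_zero hnonneg hne hroot⟩
  have hroot' : ∑ j : Fin 5, ((h j.rev : ℝ) : ℂ) * binomC 4 j (-1 - z) = 0 := by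
    rw [sum_rev_mul_binomC_neg_one_sub 4 (fun j => (h j : ℂ)), hroot, mul_zero]
  have hne' : h ∘ Fin.rev ≠ 0 := fun H => hne (Fin.rev_surjective.injective_comp_right H)
  have := re_le_three_of_sum_binomC_four_eq_zero (fun j => hnonneg j.rev) hne' hroot'
  simp only [Complex.sub_re, Complex.neg_re, Complex.one_re] at this
  linarith
end
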